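/- Let W : R^q → R be continuously differentiable with L-Lipschitz gradient, and suppose ∇W(s) = -B(s) h(s) where, for each s, B(s) is a symmetric matrix whose spectrum lies in [v_min, v_max] with 0 < v_min ≤ v_max. Then for any s, H ∈ R^q, any γ > 0, and any β > 0: W(s + γ H) ≤ W(s) - γ v_min (1 - β²/(2 v_min) - γ L/(2 v_min)) ‖H‖² + γ (v_max²/(2β²)) ‖H - h(s)‖². -/

import Mathlib

open scoped RealInnerProductSpace NNReal

lemma aux_bound {E : Type*} [NormedAddCommGroup E] [InnerProductSpace ℝ E]
    (B : E →ₗ[ℝ] E) (hsymm : ∀ x y, ⟪B x, y⟫ = ⟪x, B y⟫)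
    (vmin vmax : ℝ) (h0 : 0 ≤ vmin) (h0' : 0 ≤ vmax)
    (hlo : ∀ x, vmin * ‖x‖ ^ 2 ≤ ⟪B x, x⟫) (hhi : ∀ x, ⟪B x, x⟫ ≤ vmax * ‖x‖ ^ 2)
    (x y : E) : ⟪B x, y⟫ ≤ vmax * ‖x‖ * ‖y‖ := by
  rcases eq_or_ne x 0 with rfl | hx
  · simp
  rcases eq_or_ne y 0 with rfl | hy
  · simp
  have hnx : (0:ℝ) < ‖x‖ := norm_pos_iff.2 hx
  have hny : (0:ℝ) < ‖y‖ := norm_pos_iff.2 hy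
  set c : ℝ := ‖y‖ / ‖x‖ with hc
  have hcpos : 0 < c := div_pos hny hnx
  have hcx : c * ‖x‖ = ‖y‖ := div_mul_cancel₀ _ hnx.ne'
  have hyx : ⟪B y, x⟫ = ⟪B x, y⟫ := by rw [real_inner_comm, hsymm]
  have hkey : 4 * c * ⟪B x, y⟫ = ⟪B (c • x + y), c • x + y⟫ - ⟪B (c • x - y), c • x - y⟫ := by
    simp only [map_add, map_sub, map_smul, inner_add_left, inner_add_right,
      inner_sub_left, inner_sub_right, real_inner_smul_left, real_inner_smul_right]
    rw [hyx]; ring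
  have h1 : ⟪B (c • x + y), c • x + y⟫ ≤ vmax * (2 * ‖y‖) ^ 2 := by
    refine (hhi _).trans ?_
    have hn : ‖c • x + y‖ ≤ 2 * ‖y‖ := by
      calc ‖c • x + y‖ ≤ ‖c • x‖ + ‖y‖ := norm_add_le _ _
      _ = 2 * ‖y‖ := by rw [norm_smul, Real.norm_eq_abs, abs_of_pos hcpos, hcx]; ring
    have h2 := mul_le_mul hn hn (norm_nonneg _) (by positivity : (0:ℝ) ≤ 2*‖y‖)
    nlinarith [h2]
  have h2 : 0 ≤ ⟪B (c • x - y), c • x - y⟫ := by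
    refine le_trans ?_ (hlo _); positivity
  have hcx2 : c * ‖x‖ * (vmax * ‖y‖) = ‖y‖ * (vmax * ‖y‖) := by rw [hcx]
  nlinarith [hkey, h1, h2, hcpos, hcx2, hny, hnx]


lemma descent_lemma {E : Type*} [NormedAddCommGroup E] [InnerProductSpace ℝ E] [CompleteSpace E]
    (W : E → ℝ) (hdiff : Differentiable ℝ W) (Lc : ℝ) (hLc : 0 < Lc)
    (hLip : LipschitzWith (Real.toNNReal Lc) (fun s => gradient W s))
    (s v : E) : W (s + v) ≤ W s + ⟪gradient W s, v⟫ + Lc / 2 * ‖v‖ ^ 2 := by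
  set a := ⟪gradient W s, v⟫ with ha
  set φ : ℝ → ℝ := fun t => W (s + t • v) - t * a - Lc * ‖v‖ ^ 2 / 2 * t ^ 2 with hφdef
  have hcurve : ∀ t : ℝ, HasDerivAt (fun t : ℝ => s + t • v) v t := fun t => by
    simpa using ((hasDerivAt_id t).smul_const v).const_add s
  have hW : ∀ t : ℝ, HasDerivAt (fun t : ℝ => W (s + t • v)) ⟪gradient W (s + t • v), v⟫ t := by
    intro t
    have h1 : HasFDerivAt W (InnerProductSpace.toDual ℝ E (gradient W (s + t • v))) (s + t • v) :=
      (hdiff _).hasGradientAt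
    exact h1.comp_hasDerivAt t (hcurve t)
  have hφ : ∀ t : ℝ, HasDerivAt φ (⟪gradient W (s + t • v), v⟫ - a - Lc * ‖v‖ ^ 2 * t) t := by
    intro t
    have h := ((hW t).sub ((hasDerivAt_id t).mul_const a)).sub
      ((hasDerivAt_pow 2 t).const_mul (Lc * ‖v‖ ^ 2 / 2))
    convert h using 1
    · rfl
    · rfl
    · rfl
    ring
  have hanti : AntitoneOn φ (Set.Icc 0 1) := by
    apply antitoneOn_of_deriv_nonpos (convex_Icc 0 1)
    · exact fun t _ => ((hφ t).differentiableAt.continuousAt).continuousWithinAt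
    · exact fun t _ => (hφ t).differentiableAt.differentiableWithinAt
    · intro t ht
      rw [interior_Icc] at ht
      rw [(hφ t).deriv]
      have hL : Lc = ((Real.toNNReal Lc : ℝ≥0) : ℝ) := (Real.coe_toNNReal _ hLc.le).symm
      have hl := hLip.dist_le_mul (s + t • v) s
      rw [dist_eq_norm, dist_eq_norm, add_sub_cancel_left, norm_smul, Real.norm_eq_abs,
        abs_of_pos ht.1] at hl
      have hi : ⟪gradient W (s + t • v) - gradient W s, v⟫ ≤
          ‖gradient W (s + t • v) - gradient W s‖ * ‖v‖ := real_inner_le_norm _ _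
      have hsub : ⟪gradient W (s + t • v) - gradient W s, v⟫ =
          ⟪gradient W (s + t • v), v⟫ - a := by rw [inner_sub_left, ha]
      rw [hsub] at hi
      have hvnn : (0:ℝ) ≤ ‖v‖ := norm_nonneg v
      have : ‖gradient W (s + t • v) - gradient W s‖ * ‖v‖ ≤ Lc * (t * ‖v‖) * ‖v‖ := by
        apply mul_le_mul_of_nonneg_right _ hvnn
        rw [hL]; exact hl
      nlinarith
  have h01 : φ 1 ≤ φ 0 := hanti (Set.left_mem_Icc.2 zero_le_one)
    (Set.right_mem_Icc.2 zero_le_one) zero_le_one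
  simp only [hφdef, one_smul, zero_smul, add_zero, one_pow, one_mul, zero_mul, zero_pow,
    mul_zero, sub_zero] at h01
  linarith

/-- One-step descent inequality for the Lyapunov function `W` along the SA update
`s ← s + γ H`. -/
theorem stmt_12 (q : ℕ) (W : EuclideanSpace ℝ (Fin q) → ℝ)
    (hdiff : Differentiable ℝ W) (Lc : ℝ) (hLc : 0 < Lc)
    (hLip : LipschitzWith (Real.toNNReal Lc) (fun s => gradient W s))
    (B : EuclideanSpace ℝ (Fin q) → EuclideanSpace ℝ (Fin q) →ₗ[ℝ] EuclideanSpace ℝ (Fin q))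
    (hsymm : ∀ s x y, ⟪B s x, y⟫ = ⟪x, B s y⟫)
    (vmin vmax : ℝ) (hv : 0 < vmin) (hvv : vmin ≤ vmax)
    (hspec_lo : ∀ s x, vmin * ‖x‖ ^ 2 ≤ ⟪B s x, x⟫)
    (hspec_hi : ∀ s x, ⟪B s x, x⟫ ≤ vmax * ‖x‖ ^ 2)
    (hfun : EuclideanSpace ℝ (Fin q) → EuclideanSpace ℝ (Fin q))
    (hgrad : ∀ s, gradient W s = -(B s (hfun s)))
    (s H : EuclideanSpace ℝ (Fin q)) (γ β : ℝ) (hγ : 0 < γ) (hβ : 0 < β) :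
    W (s + γ • H) ≤ W s -
      γ * vmin * (1 - β ^ 2 / (2 * vmin) - γ * Lc / (2 * vmin)) * ‖H‖ ^ 2 +
      γ * (vmax ^ 2 / (2 * β ^ 2)) * ‖H - hfun s‖ ^ 2 := by
  have h0' : (0:ℝ) ≤ vmax := hv.le.trans hvv
  have key := descent_lemma W hdiff Lc hLc hLip s (γ • H)
  have hnv : ‖γ • H‖ ^ 2 = γ ^ 2 * ‖H‖ ^ 2 := by
    rw [norm_smul, Real.norm_eq_abs, abs_of_pos hγ, mul_pow]
  have hinner : ⟪gradient W s, γ • H⟫ =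
      γ * (-⟪B s H, H⟫ + ⟪B s (H - hfun s), H⟫) := by
    rw [hgrad, real_inner_smul_right, inner_neg_left, map_sub, inner_sub_left]
    ring
  rw [hnv, hinner] at key
  have hb1 := hspec_lo s H
  have hb2 := aux_bound (B s) (hsymm s) vmin vmax hv.le h0' (hspec_lo s) (hspec_hi s)
    (H - hfun s) H
  have young : vmax * ‖H - hfun s‖ * ‖H‖ ≤
      β ^ 2 / 2 * ‖H‖ ^ 2 + vmax ^ 2 / (2 * β ^ 2) * ‖H - hfun s‖ ^ 2 := by
    rw [← sub_nonneg]
    have heq : β ^ 2 / 2 * ‖H‖ ^ 2 + vmax ^ 2 / (2 * β ^ 2) * ‖H - hfun s‖ ^ 2 -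
        vmax * ‖H - hfun s‖ * ‖H‖ =
        (β ^ 2 * ‖H‖ - vmax * ‖H - hfun s‖) ^ 2 / (2 * β ^ 2) := by
      field_simp
      ring
    rw [heq]
    positivity
  have hexp : γ * vmin * (1 - β ^ 2 / (2 * vmin) - γ * Lc / (2 * vmin)) * ‖H‖ ^ 2 =
      (γ * vmin - γ * β ^ 2 / 2 - γ ^ 2 * Lc / 2) * ‖H‖ ^ 2 := by
    field_simp
  rw [hexp]
  have m1 := mul_le_mul_of_nonneg_left hb1 hγ.le
  have m2 := mul_le_mul_of_nonneg_left (hb2.trans young) hγ.le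
  linarith [key, m1, m2]
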